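/- arXiv:math/9406203 — 2 statements merged into one kernel-verified Lean document; each statement's English description precedes it below -/
import Mathlib

section
/- Every subgroup of the symmetric group Sym(n) on n points (n ≥ 1) can be generated by at most n − 1 elements. -/
/-!
Order the points linearly and attach to each nonidentity generator `g`, with least moved point
`a`, the edge `{a, g a}`. Among the finite generating sets of `H`, take one minimising the sum,
over its elements, of the number of points lying at or above the least moved point. If `g a` could
be reached from `a` along edges of other generators that fix every point below `a`, their product
`π` would satisfy `π a = g a`, so `π⁻¹ * g` fixes every point up to `a`; replacing `g` by it keeps
the generated subgroup and lowers the sum. Hence distinct generators give distinct edges, and the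
edges form a forest: on a cycle, the edge with the smallest lower endpoint is bypassed by the rest
of the cycle. A forest on `n` vertices has at most `n - 1` edges.
-/

open Finset SimpleGraph

theorem SimpleGraph.IsAcyclic.card_edgeFinset_le {V : Type*} [Fintype V] {G : SimpleGraph V}
    [Fintype G.edgeSet] (hG : G.IsAcyclic) : #G.edgeFinset ≤ Fintype.card V - 1 := by
  classical
  cases isEmpty_or_nonempty V
  · simp [Subsingleton.elim G ⊥]
  · obtain ⟨T, hGT, -, hT⟩ := connected_top.exists_isTree_le_of_le_of_isAcyclic le_top hG
    have := hT.card_edgeFinset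
    have := card_le_card (edgeFinset_mono hGT)
    omega

theorem Subgroup.closure_insert_sdiff_singleton_eq {G : Type*} [Group G] {s : Set G} {g p : G}
    (hp : p ∈ closure s) (hgp : g ∈ closure (insert p (s \ {g}))) :
    closure (insert p (s \ {g})) = closure s := by
  refine le_antisymm
    ((closure_le _).2 (Set.insert_subset hp (Set.sdiff_subset.trans subset_closure)))
    ((closure_le _).2 fun x hx => ?_)
  by_cases hxg : x = g
  · exact hxg ▸ hgp
  · exact subset_closure (Set.mem_insert_of_mem _ ⟨hx, hxg⟩)

namespace Equiv.Perm

open Subgroup (closure_le closure_mono subset_closure closure_insert_sdiff_singleton_eq)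

variable {α : Type*} [LinearOrder α] [Fintype α]

theorem exists_isLeast_support {g : Perm α} (hg : g ≠ 1) : ∃ a, IsLeast (g.support : Set α) a :=
  ⟨_, isLeast_min' _ (nonempty_of_ne_empty (mt support_eq_empty_iff.mp hg))⟩

theorem lt_apply_of_isLeast_support {g : Perm α} {a : α} (ha : IsLeast (g.support : Set α) a) :
    a < g a :=
  lt_of_le_of_ne (ha.2 (apply_mem_support.mpr ha.1)) (mem_support.mp ha.1).symm

theorem mem_fixingSubgroup_Iio_of_isLeast_support {g : Perm α} {a b : α}
    (ha : IsLeast (g.support : Set α) a) (hb : b ≤ a) :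
    g ∈ fixingSubgroup (Perm α) (Set.Iio b) := by
  refine (mem_fixingSubgroup_iff _).mpr fun x hx => ?_
  by_contra hgx
  exact (ha.2 (mem_support.mpr hgx)).not_gt (lt_of_lt_of_le hx hb)

def moveWeight (g : Perm α) : ℕ := #{x | ∃ y ≤ x, g y ≠ y}

theorem moveWeight_lt {g p : Perm α} {a : α} (hga : g a ≠ a) (hp : ∀ x ≤ a, p x = x) :
    moveWeight p < moveWeight g := by
  refine card_lt_card ((ssubset_iff_of_subset fun x => ?_).mpr ⟨a, ?_⟩)
  · simp only [mem_filter, mem_univ, true_and]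
    rintro ⟨y, hyx, hpy⟩
    exact ⟨a, (not_le.mp (mt (hp y) hpy)).le.trans hyx, hga⟩
  · simp only [mem_filter, mem_univ, true_and, not_exists, not_and, not_not]
    exact ⟨⟨a, le_rfl, hga⟩, hp⟩

def potential (S : Finset (Perm α)) : ℕ := ∑ g ∈ S, moveWeight g

theorem potential_insert_erase_lt {S : Finset (Perm α)} {g p : Perm α} {a : α} (hg : g ∈ S)
    (hga : g a ≠ a) (hp : ∀ x ≤ a, p x = x) :
    potential (insert p (S.erase g)) < potential S := by
  calc potential (insert p (S.erase g))
      ≤ moveWeight p + potential (S.erase g) := by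
        by_cases hpS : p ∈ S.erase g
        · rw [insert_eq_of_mem hpS]; omega
        · rw [potential, sum_insert hpS]; rfl
    _ < moveWeight g + potential (S.erase g) := by
        have := moveWeight_lt hga hp
        omega
    _ = potential S := add_sum_erase S _ hg

def leastMoveGraph (T : Set (Perm α)) : SimpleGraph α :=
  fromEdgeSet {e | ∃ g ∈ T, ∃ a, IsLeast (g.support : Set α) a ∧ e = s(a, g a)}

theorem leastMoveGraph_adj {T : Set (Perm α)} {x y : α} :
    (leastMoveGraph T).Adj x y ↔
      (∃ g ∈ T, ∃ a, IsLeast (g.support : Set α) a ∧ s(x, y) = s(a, g a)) ∧ x ≠ y :=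
  Iff.rfl

theorem mem_edgeSet_leastMoveGraph {T : Set (Perm α)} {g : Perm α} {a : α} (hg : g ∈ T)
    (ha : IsLeast (g.support : Set α) a) : s(a, g a) ∈ (leastMoveGraph T).edgeSet :=
  leastMoveGraph_adj.mpr ⟨⟨g, hg, a, ha, rfl⟩, (lt_apply_of_isLeast_support ha).ne⟩

theorem exists_mem_closure_apply_eq_of_reachable {T : Set (Perm α)} {x y : α}
    (h : (leastMoveGraph T).Reachable x y) : ∃ π ∈ Subgroup.closure T, π x = y := by
  rw [reachable_iff_reflTransGen] at h
  induction h with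
  | refl => exact ⟨1, one_mem _, rfl⟩
  | tail _ hyz ih =>
    obtain ⟨π, hπ, rfl⟩ := ih
    obtain ⟨⟨g, hg, a, -, he⟩, -⟩ := leastMoveGraph_adj.mp hyz
    have hgT : g ∈ Subgroup.closure T := subset_closure hg
    rcases Sym2.eq_iff.mp he with ⟨h1, h2⟩ | ⟨h1, h2⟩
    · exact ⟨g * π, mul_mem hgT hπ, by rw [mul_apply, h1, h2]⟩
    · exact ⟨g⁻¹ * π, mul_mem (inv_mem hgT) hπ, by rw [mul_apply, h1, inv_eq_iff_eq, h2]⟩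

theorem deleteEdges_leastMoveGraph_le {T : Set (Perm α)} {g : Perm α} {a : α}
    (ha : IsLeast (g.support : Set α) a) :
    (leastMoveGraph T).deleteEdges {s(a, g a)} ≤ leastMoveGraph (T \ {g}) := by
  intro x y hxy
  obtain ⟨⟨⟨h, hT, b, hb, he⟩, hne⟩, hdel⟩ := deleteEdges_adj.mp hxy
  refine leastMoveGraph_adj.mpr ⟨⟨h, ⟨hT, ?_⟩, b, hb, he⟩, hne⟩
  rintro rfl
  exact hdel (by rw [he, ha.unique hb]; rfl)

def IsReduced (S : Set (Perm α)) : Prop :=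
  ∀ g ∈ S, ∀ a, IsLeast (g.support : Set α) a →
    ¬ (leastMoveGraph (S \ {g} ∩ fixingSubgroup (Perm α) (Set.Iio a))).Reachable a (g a)

theorem isReduced_of_forall_potential_le {S : Finset (Perm α)}
    (hmin : ∀ T : Finset (Perm α),
      Subgroup.closure (T : Set (Perm α)) = Subgroup.closure S → potential S ≤ potential T) :
    IsReduced (S : Set (Perm α)) := by
  intro g hg a ha hreach
  obtain ⟨π, hπ, hπa⟩ := exists_mem_closure_apply_eq_of_reachable hreach
  have hπS : π ∈ Subgroup.closure (↑S \ {g}) := closure_mono Set.inter_subset_left hπ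
  have hπfix : π ∈ fixingSubgroup (Perm α) (Set.Iio a) :=
    (closure_le _).2 Set.inter_subset_right hπ
  have hgfix := mem_fixingSubgroup_Iio_of_isLeast_support ha le_rfl
  set p := π⁻¹ * g
  have hp : ∀ x ≤ a, p x = x := by
    intro x hx
    rcases hx.lt_or_eq with hx | rfl
    · have hgx : g x = x := (mem_fixingSubgroup_iff _).mp hgfix x hx
      have hπx : π⁻¹ x = x := (mem_fixingSubgroup_iff _).mp (inv_mem hπfix) x hx
      rw [mul_apply, hgx, hπx]
    · rw [mul_apply, inv_eq_iff_eq, hπa]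
  have hgp : g ∈ Subgroup.closure (insert p (↑S \ {g})) := by
    have := mul_mem (closure_mono (Set.subset_insert p _) hπS)
      (subset_closure (Set.mem_insert p _))
    rwa [mul_inv_cancel_left] at this
  have hpS : p ∈ Subgroup.closure S :=
    mul_mem (inv_mem (closure_mono Set.sdiff_subset hπS)) (subset_closure hg)
  have hclosure : Subgroup.closure ((insert p (S.erase g) : Finset (Perm α)) : Set (Perm α)) =
      Subgroup.closure S := by
    rw [coe_insert, coe_erase]
    exact closure_insert_sdiff_singleton_eq hpS hgp
  exact (potential_insert_erase_lt hg (mem_support.mp ha.1) hp).not_ge (hmin _ hclosure)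

theorem IsReduced.isAcyclic {S : Set (Perm α)} (hS : IsReduced S) :
    (leastMoveGraph S).IsAcyclic := by
  intro v c hc
  have hedge : ∀ e ∈ c.edges, ∃ g ∈ S, ∃ a, IsLeast (g.support : Set α) a ∧ e = s(a, g a) :=
    fun e he => ((edgeSet_fromEdgeSet _).subset (c.edges_subset_edgeSet he)).1
  obtain ⟨e₀, he₀⟩ := List.exists_mem_of_ne_nil _ (mt Walk.edges_eq_nil.mp hc.not_nil)
  obtain ⟨g₀, hg₀, a₀, ha₀, rfl⟩ := hedge e₀ he₀
  obtain ⟨a, ⟨g, hg, ha, hac⟩, hmin⟩ := wellFounded_lt.has_min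
    {a | ∃ g ∈ S, IsLeast (g.support : Set α) a ∧ s(a, g a) ∈ c.edges} ⟨a₀, g₀, hg₀, ha₀, he₀⟩
  have hsub : ∀ e ∈ c.edges,
      e ∈ (leastMoveGraph (S ∩ fixingSubgroup (Perm α) (Set.Iio a))).edgeSet := by
    intro e he
    obtain ⟨h, hh, b, hb, rfl⟩ := hedge e he
    have hab : a ≤ b := not_lt.mp (hmin b ⟨h, hh, hb, he⟩)
    exact mem_edgeSet_leastMoveGraph ⟨hh, mem_fixingSubgroup_Iio_of_isLeast_support hb hab⟩ hb
  have hreach := (adj_and_reachable_delete_edges_iff_exists_cycle.mpr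
    ⟨v, c.transfer _ hsub, hc.transfer hsub, by rwa [Walk.edges_transfer]⟩).2
  refine hS g hg a ha ?_
  rw [← Set.inter_sdiff_right_comm]
  exact hreach.mono (deleteEdges_leastMoveGraph_le ha)

theorem IsReduced.eq_of_edge_eq {S : Set (Perm α)} (hS : IsReduced S) {g h : Perm α} {a b : α}
    (hg : g ∈ S) (hh : h ∈ S) (ha : IsLeast (g.support : Set α) a)
    (hb : IsLeast (h.support : Set α) b) (he : s(a, g a) = s(b, h b)) : g = h := by
  have hab : a = b := by
    have := lt_apply_of_isLeast_support ha
    have := lt_apply_of_isLeast_support hb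
    rcases Sym2.eq_iff.mp he with ⟨h1, -⟩ | ⟨h1, h2⟩
    · exact h1
    · order
  subst hab
  by_contra hgh
  refine hS g hg a ha (Adj.reachable (leastMoveGraph_adj.mpr ⟨⟨h, ⟨⟨hh, Ne.symm hgh⟩,
    mem_fixingSubgroup_Iio_of_isLeast_support hb le_rfl⟩, a, hb, he⟩, ?_⟩))
  exact (lt_apply_of_isLeast_support ha).ne

theorem IsReduced.card_erase_one_le {S : Finset (Perm α)} (hS : IsReduced (S : Set (Perm α))) :
    #(S.erase 1) ≤ Fintype.card α - 1 := by
  classical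
  calc #(S.erase 1)
      ≤ #(leastMoveGraph (S : Set (Perm α))).edgeFinset := by
        refine card_le_card_of_forall_subsingleton
          (fun g e => ∃ a, IsLeast (g.support : Set α) a ∧ e = s(a, g a)) (fun g hg => ?_)
          (fun e _ g ⟨hg, a, ha, hge⟩ h ⟨hh, b, hb, hhe⟩ =>
            hS.eq_of_edge_eq (mem_of_mem_erase hg) (mem_of_mem_erase hh) ha hb (hge ▸ hhe))
        obtain ⟨hg1, hg⟩ := mem_erase.mp hg
        obtain ⟨a, ha⟩ := exists_isLeast_support hg1
        exact ⟨_, mem_edgeFinset.mpr (mem_edgeSet_leastMoveGraph hg ha), a, ha, rfl⟩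
    _ ≤ Fintype.card α - 1 := hS.isAcyclic.card_edgeFinset_le

theorem exists_finset_card_le_closure_eq (H : Subgroup (Perm α)) :
    ∃ S : Finset (Perm α), #S ≤ Fintype.card α - 1 ∧ Subgroup.closure (S : Set (Perm α)) = H := by
  classical
  obtain ⟨S, hSH, hmin⟩ := (measure potential).wf.has_min
    {S : Finset (Perm α) | Subgroup.closure (S : Set (Perm α)) = H}
    ⟨univ.filter (· ∈ H), by simp⟩
  have hS : IsReduced (S : Set (Perm α)) :=
    isReduced_of_forall_potential_le fun T hT => not_lt.mp (hmin T (hT.trans hSH))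
  refine ⟨S.erase 1, hS.card_erase_one_le, ?_⟩
  rw [coe_erase, Subgroup.closure_sdiff_one]
  exact hSH

end Equiv.Perm

theorem subgroup_of_perm_generated_by_card_sub_one_general (n : ℕ)
    (H : Subgroup (Equiv.Perm (Fin n))) :
    ∃ S : Finset (Equiv.Perm (Fin n)),
      S.card ≤ n - 1 ∧ Subgroup.closure (S : Set (Equiv.Perm (Fin n))) = H := by
  simpa using Equiv.Perm.exists_finset_card_le_closure_eq H

/-- **Jerrum's bound.** Every subgroup of the symmetric group on `n ≥ 1` points can be
generated by at most `n - 1` elements. -/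
theorem subgroup_of_perm_generated_by_card_sub_one (n : ℕ) (hn : 1 ≤ n)
    (H : Subgroup (Equiv.Perm (Fin n))) :
    ∃ S : Finset (Equiv.Perm (Fin n)),
      S.card ≤ n - 1 ∧ Subgroup.closure (S : Set (Equiv.Perm (Fin n))) = H :=
  subgroup_of_perm_generated_by_card_sub_one_general n H
end

section
/- Let G be a group of permutations of a finite set Ω, let p be a prime, and let z ∈ G be an element of order p. Let C be the centralizer of z in G. Then C permutes the orbits of ⟨z⟩ on Ω, and the kernel of the induced action of C on the set of ⟨z⟩-orbits is a p-group (every element of this kernel has order dividing p). -/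
/-- Let `G` be a group of permutations of a finite set `Ω`, `p` a prime, and `z ∈ G` an
element of order `p`. Then every element of the centralizer `C` of `z` in `G` maps each
`⟨z⟩`-orbit onto a `⟨z⟩`-orbit, and any element of `C` fixing every `⟨z⟩`-orbit setwise
has order dividing `p` (so the kernel of the induced action of `C` on the set of
`⟨z⟩`-orbits is a `p`-group). -/
theorem centralizer_kernel_on_cycles_is_pGroup {Ω : Type*} [Fintype Ω]
    (G : Subgroup (Equiv.Perm Ω)) (p : ℕ) (hp : p.Prime)
    (z : Equiv.Perm Ω) (hz : z ∈ G) (hord : orderOf z = p) :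
    (∀ g ∈ G, g * z = z * g → ∀ x : Ω,
        (⇑g) '' MulAction.orbit (Subgroup.zpowers z) x =
          MulAction.orbit (Subgroup.zpowers z) (g x)) ∧
      (∀ g ∈ G, g * z = z * g →
        (∀ x : Ω, (⇑g) '' MulAction.orbit (Subgroup.zpowers z) x =
            MulAction.orbit (Subgroup.zpowers z) x) →
        g ^ p = 1) := by
  have key : ∀ g : Equiv.Perm Ω, g * z = z * g → ∀ (k : ℤ) (x : Ω),
      g ((z ^ k) x) = (z ^ k) (g x) := by
    intro g hc k x
    have h : g * z ^ k = z ^ k * g := (Commute.zpow_right hc k)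
    calc g ((z ^ k) x) = (g * z ^ k) x := rfl
      _ = (z ^ k * g) x := by rw [h]
      _ = (z ^ k) (g x) := rfl
  have korbit : ∀ g : Equiv.Perm Ω, g * z = z * g → ∀ x : Ω,
      (⇑g) '' MulAction.orbit (Subgroup.zpowers z) x =
        MulAction.orbit (Subgroup.zpowers z) (g x) := by
    intro g hc x
    ext y
    constructor
    · rintro ⟨w, hw, rfl⟩
      rw [MulAction.mem_orbit_iff] at hw ⊢
      obtain ⟨⟨m, hm⟩, hmx⟩ := hw
      obtain ⟨k, rfl⟩ := hm
      refine ⟨⟨z ^ k, k, rfl⟩, ?_⟩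
      have hxw : (z ^ k) x = w := hmx
      show (z ^ k) (g x) = g w
      rw [← hxw, ← key g hc k x]
    · intro hy
      rw [MulAction.mem_orbit_iff] at hy
      obtain ⟨⟨m, hm⟩, hmx⟩ := hy
      obtain ⟨k, rfl⟩ := hm
      refine ⟨(z ^ k) x, ⟨⟨z ^ k, k, rfl⟩, rfl⟩, ?_⟩
      have : (z ^ k) (g x) = y := hmx
      rw [← this, key g hc k x]
  refine ⟨fun g _ hc => korbit g hc, ?_⟩
  intro g hg hc hfix
  have hx : ∀ x : Ω, ∃ k : ℤ, (z ^ k) x = g x := by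
    intro x
    have hmem : g x ∈ MulAction.orbit (Subgroup.zpowers z) x := by
      rw [← hfix x]
      exact ⟨x, MulAction.mem_orbit_self x, rfl⟩
    rw [MulAction.mem_orbit_iff] at hmem
    obtain ⟨⟨m, k, rfl⟩, h⟩ := hmem
    exact ⟨k, h⟩
  ext x
  obtain ⟨k, hk⟩ := hx x
  have hpow : ∀ n : ℕ, (g ^ n) x = (z ^ (k * n)) x := by
    intro n
    induction n with
    | zero => simp
    | succ n ih =>
      have h1 : (g ^ (n + 1)) x = g ((g ^ n) x) := by
        rw [pow_succ']; rfl
      rw [h1, ih, key g hc, ← hk, ← Equiv.Perm.mul_apply, ← zpow_add]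
      congr 1
      push_cast
      ring
  have hz1 : z ^ (k * (p : ℤ)) = 1 := by
    rw [mul_comm, zpow_mul, zpow_natCast, ← hord, pow_orderOf_eq_one, one_zpow]
  simp [hpow p, hz1]
end
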